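/- Fix β > 0, σ > 0, x0 > θ > 0, 0 < η < ν < 1, and s' > max(8, 1 + x0²/θ²). Define a1 = (θ − x0)√(2β)/σ, b1 = (θ/2)√(2β)/σ, a2 = (√(2β)/σ)(θ√(s'+1) − x0), l1(s) = a1 + b1·s, s* = 2(√(s'+1) − 1), Δ = s' − s*, and let g2(s') = (|a1|/(2π)) ∫_{s*}^{s'} (l1(s) − a2)·(s(s'−s))^{−3/2}·exp(−l1(s)²/(2s) − (l1(s)−a2)²/(2(s'−s))) ds. Then g2(s') ≥ A·η·(ν − η)·exp(−2B/(1 − ν²)), where A = 64βθ(x0 − θ)/(9πσ²(s')³) and B = βθ²Δ²s'/(128σ²). -/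

import Mathlib

/-!
On the window `s* + ηΔ ≤ s ≤ s* + νΔ` the integrand is at least
`b1 ηΔ s'⁻³ exp (-2B / (1 - ν²))`: there `l1 s - a2 = b1 (s - s*) ≥ b1 ηΔ`, `s (s' - s) ≤ s'²`,
and both Gaussian exponents are controlled using `s* ≤ Δ` and `Δ s' ≥ 32`. Since the integrand
is nonnegative, the integral is at least `(ν - η) Δ` times this bound, and
`|a1| b1 = βθ(x0 - θ)/σ²` together with `Δ² ≥ 128/9` yields the constant `A`.
-/

open Real Set MeasureTheory intervalIntegral

section ConvIntegrand

noncomputable def convIntegrand (l : ℝ → ℝ) (a s' s : ℝ) : ℝ :=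
  (l s - a) * (s * (s' - s)) ^ (-(3 : ℝ) / 2) *
    exp (-(l s) ^ 2 / (2 * s) - (l s - a) ^ 2 / (2 * (s' - s)))

variable {l : ℝ → ℝ} {a s' s : ℝ}

lemma convIntegrand_nonneg (hl : a ≤ l s) (hs : 0 ≤ s) (hss' : s ≤ s') :
    0 ≤ convIntegrand l a s' s :=
  mul_nonneg (mul_nonneg (sub_nonneg.2 hl) (rpow_nonneg (mul_nonneg hs (sub_nonneg.2 hss')) _))
    (exp_pos _).le

lemma continuousOn_convIntegrand (hl : Continuous l) {p q : ℝ} (hp : 0 < p) (hq : q < s') :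
    ContinuousOn (convIntegrand l a s') (Icc p q) := by
  have hs : ∀ s ∈ Icc p q, 0 < s := fun s hs => hp.trans_le hs.1
  have hs' : ∀ s ∈ Icc p q, 0 < s' - s := fun s hs => sub_pos.2 (hs.2.trans_lt hq)
  refine ((by fun_prop : Continuous fun s => l s - a).continuousOn.mul
    (ContinuousOn.rpow_const (by fun_prop) fun x hx => Or.inl ?_)).mul
    (continuous_exp.comp_continuousOn ((ContinuousOn.div (by fun_prop) (by fun_prop) ?_).sub
      (ContinuousOn.div (by fun_prop) (by fun_prop) ?_)))
  · exact (mul_pos (hs x hx) (hs' x hx)).ne'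
  · exact fun x hx => (mul_pos two_pos (hs x hx)).ne'
  · exact fun x hx => (mul_pos two_pos (hs' x hx)).ne'

lemma measurable_convIntegrand (hl : Measurable l) : Measurable (convIntegrand l a s') := by
  unfold convIntegrand; fun_prop

/-- `exp (-x) ≤ 2 / x²` turns the Gaussian factor into a power that cancels the singularity. -/
lemma rpow_neg_three_halves_mul_exp_neg_div_le {t k : ℝ} (ht : 0 ≤ t) (hk : 0 < k) :
    t ^ (-(3 : ℝ) / 2) * exp (-k / t) ≤ 2 * √t / k ^ 2 := by
  rcases ht.eq_or_lt with rfl | ht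
  · simp [zero_rpow (by norm_num : -(3 : ℝ) / 2 ≠ 0)]
  have hexp : exp (-k / t) ≤ 2 * t ^ 2 / k ^ 2 := by
    have h := pow_div_factorial_le_exp _ (div_pos hk ht).le 2
    rw [neg_div, exp_neg]
    calc (exp (k / t))⁻¹ ≤ ((k / t) ^ 2 / (Nat.factorial 2 : ℝ))⁻¹ :=
          inv_anti₀ (by positivity) h
      _ = 2 * t ^ 2 / k ^ 2 := by field_simp; norm_num
  have hpow : t ^ (-(3 : ℝ) / 2) * t ^ 2 = √t := by
    rw [sqrt_eq_rpow, ← rpow_natCast, ← rpow_add ht]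
    norm_num
  calc t ^ (-(3 : ℝ) / 2) * exp (-k / t) ≤ t ^ (-(3 : ℝ) / 2) * (2 * t ^ 2 / k ^ 2) :=
        mul_le_mul_of_nonneg_left hexp (rpow_nonneg ht.le _)
    _ = 2 * √t / k ^ 2 := by rw [← hpow]; ring

lemma convIntegrand_le {p d D : ℝ} (hp : 0 < p) (hps : p ≤ s) (hss' : s ≤ s') (hd : 0 < d)
    (hdl : d ≤ l s - a) (hlD : l s - a ≤ D) :
    convIntegrand l a s' s ≤ D * p ^ (-(3 : ℝ) / 2) * (8 * √s' / d ^ 4) := by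
  have hs : 0 < s := hp.trans_le hps
  have ht : 0 ≤ s' - s := sub_nonneg.2 hss'
  have hy : 0 < l s - a := hd.trans_le hdl
  have hsplit : convIntegrand l a s' s =
      (l s - a) * s ^ (-(3 : ℝ) / 2) * exp (-(l s) ^ 2 / (2 * s)) *
        ((s' - s) ^ (-(3 : ℝ) / 2) * exp (-((l s - a) ^ 2 / 2) / (s' - s))) := by
    have hexp : exp (-(l s) ^ 2 / (2 * s) - (l s - a) ^ 2 / (2 * (s' - s))) =
        exp (-(l s) ^ 2 / (2 * s)) * exp (-((l s - a) ^ 2 / 2) / (s' - s)) := by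
      rw [← exp_add, neg_div (s' - s), div_div, ← sub_eq_add_neg]
    rw [convIntegrand, mul_rpow hs.le ht, hexp]
    ring
  have hgauss : exp (-(l s) ^ 2 / (2 * s)) ≤ 1 :=
    exp_le_one_iff.2 (div_nonpos_of_nonpos_of_nonneg (by nlinarith) (by positivity))
  have hsing : (s' - s) ^ (-(3 : ℝ) / 2) * exp (-((l s - a) ^ 2 / 2) / (s' - s)) ≤
      8 * √s' / d ^ 4 :=
    calc _ ≤ 2 * √(s' - s) / ((l s - a) ^ 2 / 2) ^ 2 :=
          rpow_neg_three_halves_mul_exp_neg_div_le ht (by positivity)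
      _ = 8 * √(s' - s) / (l s - a) ^ 4 := by field_simp; ring
      _ ≤ 8 * √s' / d ^ 4 := by gcongr; linarith
  have hD : 0 ≤ D * p ^ (-(3 : ℝ) / 2) := mul_nonneg (hy.le.trans hlD) (by positivity)
  rw [hsplit, ← mul_one (D * _)]
  exact mul_le_mul (mul_le_mul (mul_le_mul hlD (rpow_le_rpow_of_nonpos hp hps (by norm_num))
    (by positivity) (hy.le.trans hlD)) hgauss (exp_pos _).le (by simpa using hD)) hsing
    (by positivity) (by simpa using hD)

lemma intervalIntegrable_convIntegrand (hl : Continuous l) {p q d D : ℝ} (hp : 0 < p)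
    (hpq : p ≤ q) (hqs' : q < s') (hd : 0 < d)
    (hlq : ∀ s ∈ Ioc q s', d ≤ l s - a ∧ l s - a ≤ D) :
    IntervalIntegrable (convIntegrand l a s') volume p s' := by
  refine ((continuousOn_convIntegrand hl hp hqs').intervalIntegrable_of_Icc hpq).trans
    (IntervalIntegrable.mono_fun' (g := fun _ => D * p ^ (-(3 : ℝ) / 2) * (8 * √s' / d ^ 4))
      intervalIntegrable_const (measurable_convIntegrand hl.measurable).aestronglyMeasurable ?_)
  filter_upwards [ae_restrict_mem measurableSet_uIoc] with s hs
  rw [uIoc_of_le hqs'.le] at hs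
  obtain ⟨hdl, hlD⟩ := hlq s hs
  have hps : p ≤ s := hpq.trans hs.1.le
  rw [Real.norm_of_nonneg (convIntegrand_nonneg (by linarith) (hp.le.trans hps) hs.2)]
  exact convIntegrand_le hp hps hs.2 hd hdl hlD

lemma one_div_pow_three_le_rpow (hs : 0 < s) (hss' : 0 < s' - s) :
    1 / s' ^ 3 ≤ (s * (s' - s)) ^ (-(3 : ℝ) / 2) := by
  have hs' : 0 < s' := by linarith
  have hle : s * (s' - s) ≤ s' ^ 2 := by nlinarith [sq_nonneg (s' - 2 * s)]
  calc 1 / s' ^ 3 = (s' ^ 2) ^ (-(3 : ℝ) / 2) := by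
        rw [← rpow_natCast s' 2, ← rpow_mul hs'.le]
        norm_num [rpow_neg hs'.le]
    _ ≤ _ := rpow_le_rpow_of_nonpos (mul_pos hs hss') hle (by norm_num)

lemma add_add_sq_mul_div_one_sub_le {s₀ Δ ν s' : ℝ} (hs₀ : 0 ≤ s₀) (hs₀Δ : s₀ ≤ Δ)
    (hΔs' : 32 ≤ Δ * s') (hν₀ : 0 ≤ ν) (hν : ν < 1) :
    s₀ + ν * Δ + ν ^ 2 * Δ / (1 - ν) ≤ Δ ^ 2 * s' / (16 * (1 - ν ^ 2)) := by
  have h1ν : 0 < 1 - ν := sub_pos.2 hν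
  have h1ν2 : 0 < 1 - ν ^ 2 := by nlinarith
  have hfactor : (s₀ + ν * Δ + ν ^ 2 * Δ / (1 - ν)) * (16 * (1 - ν ^ 2)) =
      16 * (1 + ν) * ((1 - ν) * s₀ + ν * Δ) := by
    field_simp; ring
  rw [le_div_iff₀ (by positivity), hfactor]
  nlinarith [mul_le_mul_of_nonneg_left hs₀Δ h1ν.le]

lemma le_convIntegrand {b s₀ Δ η ν : ℝ} (hb : 0 < b) (ha : 0 < a) (has₀ : a ≤ b * s₀)
    (hls : l s - a = b * (s - s₀)) (hsum : s₀ + Δ = s') (hs₀Δ : s₀ ≤ Δ) (hΔs' : 32 ≤ Δ * s')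
    (hη : 0 ≤ η) (hν : ν < 1) (hηs : s₀ + η * Δ ≤ s) (hsν : s ≤ s₀ + ν * Δ) :
    b * (η * Δ) / s' ^ 3 * exp (-(b ^ 2 * Δ ^ 2 * s' / 32) / (1 - ν ^ 2)) ≤
      convIntegrand l a s' s := by
  have hs₀ : 0 < s₀ := pos_of_mul_pos_right (ha.trans_le has₀) hb.le
  have hΔ : 0 < Δ := hs₀.trans_le hs₀Δ
  have hν₀ : 0 ≤ ν := by nlinarith
  have hs₀s : s₀ ≤ s := by nlinarith
  have hs : 0 < s := hs₀.trans_le hs₀s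
  have hs' : 0 < s' := by linarith
  have h1ν : 0 < 1 - ν := sub_pos.2 hν
  have h1ν2 : 0 < 1 - ν ^ 2 := by nlinarith
  have hls_nonneg : 0 ≤ l s - a := by rw [hls]; exact mul_nonneg hb.le (sub_nonneg.2 hs₀s)
  have hs's : (1 - ν) * Δ ≤ s' - s := by linarith
  have hs's_pos : 0 < s' - s := lt_of_lt_of_le (by nlinarith) hs's
  have hls_pos : 0 < l s := by nlinarith
  have hfirst : (l s) ^ 2 / (2 * s) ≤ b ^ 2 / 2 * (s₀ + ν * Δ) := by
    rw [div_le_iff₀ (by positivity)]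
    have : l s ≤ b * s := by nlinarith
    nlinarith [mul_le_mul this this hls_pos.le (by positivity)]
  have hsecond : (l s - a) ^ 2 / (2 * (s' - s)) ≤ b ^ 2 / 2 * (ν ^ 2 * Δ / (1 - ν)) := by
    rw [hls, div_le_iff₀ (by positivity)]
    calc (b * (s - s₀)) ^ 2 = b ^ 2 * (s - s₀) ^ 2 := mul_pow _ _ _
      _ ≤ b ^ 2 * (ν * Δ) ^ 2 := by gcongr; linarith
      _ = b ^ 2 / 2 * (ν ^ 2 * Δ / (1 - ν)) * (2 * ((1 - ν) * Δ)) := by field_simp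
      _ ≤ _ := by gcongr
  have hexponent : -(b ^ 2 * Δ ^ 2 * s' / 32) / (1 - ν ^ 2) ≤
      -(l s) ^ 2 / (2 * s) - (l s - a) ^ 2 / (2 * (s' - s)) := by
    have hsum_le := mul_le_mul_of_nonneg_left
      (add_add_sq_mul_div_one_sub_le hs₀.le hs₀Δ hΔs' hν₀ hν) (by positivity : 0 ≤ b ^ 2 / 2)
    have hrhs : b ^ 2 / 2 * (Δ ^ 2 * s' / (16 * (1 - ν ^ 2))) =
        b ^ 2 * Δ ^ 2 * s' / 32 / (1 - ν ^ 2) := by field_simp; ring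
    rw [neg_div, neg_div]
    linarith
  calc b * (η * Δ) / s' ^ 3 * exp (-(b ^ 2 * Δ ^ 2 * s' / 32) / (1 - ν ^ 2))
      = b * (η * Δ) * (1 / s' ^ 3) * exp (-(b ^ 2 * Δ ^ 2 * s' / 32) / (1 - ν ^ 2)) := by ring
    _ ≤ convIntegrand l a s' s := by
      have hlower : b * (η * Δ) ≤ l s - a := by rw [hls]; gcongr; linarith
      exact mul_le_mul
        (mul_le_mul hlower (one_div_pow_three_le_rpow hs hs's_pos) (by positivity) hls_nonneg)
        (exp_le_exp.2 hexponent) (exp_pos _).le (mul_nonneg hls_nonneg (by positivity))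

lemma le_integral_convIntegrand {b s₀ Δ η ν : ℝ} (hb : 0 < b) (ha : 0 < a) (has₀ : a ≤ b * s₀)
    (hl : ∀ t, l t - a = b * (t - s₀)) (hsum : s₀ + Δ = s') (hs₀Δ : s₀ ≤ Δ)
    (hΔs' : 32 ≤ Δ * s') (hη : 0 ≤ η) (hην : η < ν) (hν : ν < 1) :
    (ν - η) * Δ * (b * (η * Δ) / s' ^ 3 * exp (-(b ^ 2 * Δ ^ 2 * s' / 32) / (1 - ν ^ 2))) ≤
      ∫ s in s₀..s', convIntegrand l a s' s := by
  have hs₀ : 0 < s₀ := pos_of_mul_pos_right (ha.trans_le has₀) hb.le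
  have hΔ : 0 < Δ := hs₀.trans_le hs₀Δ
  have hp : s₀ ≤ s₀ + η * Δ := by nlinarith
  have hpq : s₀ + η * Δ ≤ s₀ + ν * Δ := by nlinarith
  have hq : s₀ + ν * Δ < s' := by nlinarith
  have hcont : Continuous l := by
    rw [show l = fun t => a + b * (t - s₀) from funext fun t => by linarith [hl t]]
    fun_prop
  have hint : IntervalIntegrable (convIntegrand l a s') volume s₀ s' := by
    have hν₀ : 0 < ν := hη.trans_lt hην
    refine intervalIntegrable_convIntegrand (d := b * (ν * Δ)) (D := b * Δ) hcont hs₀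
      (by nlinarith) hq (by positivity) fun s hs => ⟨?_, ?_⟩
    · rw [hl]; gcongr; linarith [hs.1]
    · rw [hl]; gcongr; linarith [hs.2]
  calc (ν - η) * Δ * (b * (η * Δ) / s' ^ 3 * exp (-(b ^ 2 * Δ ^ 2 * s' / 32) / (1 - ν ^ 2)))
      = ∫ _ in (s₀ + η * Δ)..(s₀ + ν * Δ),
          b * (η * Δ) / s' ^ 3 * exp (-(b ^ 2 * Δ ^ 2 * s' / 32) / (1 - ν ^ 2)) := by
        rw [intervalIntegral.integral_const, smul_eq_mul]; ring
    _ ≤ ∫ s in (s₀ + η * Δ)..(s₀ + ν * Δ), convIntegrand l a s' s :=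
        integral_mono_on hpq intervalIntegrable_const
          (hint.mono_set (by rw [uIcc_of_le hpq, uIcc_of_le (by linarith)]; gcongr))
          fun s hs => le_convIntegrand hb ha has₀ (hl s) hsum hs₀Δ hΔs' hη hν hs.1 hs.2
    _ ≤ ∫ s in s₀..s', convIntegrand l a s' s := by
        refine integral_mono_interval hp hpq hq.le ?_ hint
        filter_upwards [ae_restrict_mem measurableSet_Ioc] with s hs
        refine convIntegrand_nonneg ?_ (hs₀.le.trans hs.1.le) hs.2
        nlinarith [hl s, hs.1]

end ConvIntegrand

lemma three_lt_sqrt_add_one {x : ℝ} (hx : 8 < x) : 3 < √(x + 1) :=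
  (lt_sqrt (by norm_num)).2 (by linarith)

lemma sub_two_mul_sqrt_add_one_sub_one {x : ℝ} (hx : -1 ≤ x) :
    x - 2 * (√(x + 1) - 1) = (√(x + 1) - 1) ^ 2 := by
  linear_combination -(sq_sqrt (by linarith : 0 ≤ x + 1))

lemma lt_mul_sqrt_add_one {x θ s : ℝ} (hθ : 0 < θ) (hs : 1 + x ^ 2 / θ ^ 2 < s) :
    x < θ * √(s + 1) := by
  have hx : x ^ 2 < θ ^ 2 * (s - 1) := by
    rw [← div_lt_iff₀' (by positivity)]; linarith
  have hs1 : 0 ≤ s + 1 := by linarith [div_nonneg (sq_nonneg x) (sq_nonneg θ)]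
  refine lt_of_pow_lt_pow_left₀ 2 (by positivity) ?_
  rw [mul_pow, sq_sqrt hs1]
  nlinarith

open intervalIntegral in
/-- Lower bound for the convolution integral `g2(s')`:
`g2(s') ≥ A·η·(ν − η)·exp(−2B/(1 − ν²))`. -/
theorem stmt_12 (β σ x0 θ η ν s' : ℝ) (hβ : 0 < β) (hσ : 0 < σ) (hθ : 0 < θ)
    (hx0 : θ < x0) (hη : 0 < η) (hην : η < ν) (hν : ν < 1)
    (hs' : max 8 (1 + x0 ^ 2 / θ ^ 2) < s')
    (a1 b1 a2 sstar Δ : ℝ) (l1 : ℝ → ℝ) (g2 A B : ℝ)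
    (ha1 : a1 = (θ - x0) * Real.sqrt (2 * β) / σ)
    (hb1 : b1 = (θ / 2) * Real.sqrt (2 * β) / σ)
    (ha2 : a2 = (Real.sqrt (2 * β) / σ) * (θ * Real.sqrt (s' + 1) - x0))
    (hsstar : sstar = 2 * (Real.sqrt (s' + 1) - 1))
    (hΔ : Δ = s' - sstar)
    (hl1 : ∀ s, l1 s = a1 + b1 * s)
    (hg2 : g2 = (|a1| / (2 * Real.pi)) *
      ∫ s in sstar..s', (l1 s - a2) * (s * (s' - s)) ^ (-(3 : ℝ) / 2) *
        Real.exp (-(l1 s) ^ 2 / (2 * s) - (l1 s - a2) ^ 2 / (2 * (s' - s))))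
    (hA : A = 64 * β * θ * (x0 - θ) / (9 * Real.pi * σ ^ 2 * s' ^ 3))
    (hB : B = β * θ ^ 2 * Δ ^ 2 * s' / (128 * σ ^ 2)) :
    g2 ≥ A * η * (ν - η) * Real.exp (-2 * B / (1 - ν ^ 2)) := by
  have hs'8 : 8 < s' := (le_max_left _ _).trans_lt hs'
  have hu3 := three_lt_sqrt_add_one hs'8
  have hθu := lt_mul_sqrt_add_one hθ ((le_max_right _ _).trans_lt hs')
  have hΔu : Δ = (√(s' + 1) - 1) ^ 2 := by
    rw [hΔ, hsstar]; exact sub_two_mul_sqrt_add_one_sub_one (by linarith)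
  have hΔ4 : 4 < Δ := by rw [hΔu]; nlinarith only [hu3]
  obtain ⟨c, hc⟩ : ∃ c, c = √(2 * β) / σ := ⟨_, rfl⟩
  have hc0 : 0 < c := by rw [hc]; positivity
  have hc2 : c ^ 2 = 2 * β / σ ^ 2 := by rw [hc, div_pow, sq_sqrt (by positivity)]
  have ha1c : a1 = -(c * (x0 - θ)) := by rw [ha1, hc]; ring
  have hb1c : b1 = c * θ / 2 := by rw [hb1, hc]; ring
  have ha2c : a2 = c * (θ * √(s' + 1) - x0) := by rw [ha2, hc]
  have hl : ∀ t, l1 t - a2 = b1 * (t - sstar) := fun t => by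
    rw [hl1, ha1c, hb1c, ha2c, hsstar]; ring
  have ha2_le : a2 ≤ b1 * sstar := by
    rw [ha2c, hb1c, hsstar]; nlinarith only [mul_pos hc0 (sub_pos.2 hx0)]
  have hkey := le_integral_convIntegrand (s' := s') (Δ := Δ) (by rw [hb1c]; positivity)
    (by rw [ha2c]; exact mul_pos hc0 (by linarith)) ha2_le hl (by rw [hΔ]; ring)
    (by rw [hsstar, hΔu]; nlinarith only [hu3]) (by nlinarith only [hΔ4, hs'8]) hη.le hην hν
  have hA_le : A ≤ |a1| * b1 * Δ ^ 2 / (2 * π * s' ^ 3) := by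
    have hab : |a1| * b1 = β * θ * (x0 - θ) / σ ^ 2 := by
      rw [ha1c, abs_neg, abs_of_pos (mul_pos hc0 (by linarith)), hb1c]
      linear_combination θ * (x0 - θ) / 2 * hc2
    have hK : 0 ≤ β * θ * (x0 - θ) / (2 * π * σ ^ 2 * s' ^ 3) :=
      div_nonneg (mul_nonneg (by positivity) (by linarith)) (by positivity)
    calc A = 128 / 9 * (β * θ * (x0 - θ) / (2 * π * σ ^ 2 * s' ^ 3)) := by rw [hA]; ring
      _ ≤ Δ ^ 2 * (β * θ * (x0 - θ) / (2 * π * σ ^ 2 * s' ^ 3)) := by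
        gcongr; nlinarith only [hΔ4]
      _ = |a1| * b1 * Δ ^ 2 / (2 * π * s' ^ 3) := by rw [hab]; ring
  have hexp : -2 * B / (1 - ν ^ 2) = -(b1 ^ 2 * Δ ^ 2 * s' / 32) / (1 - ν ^ 2) := by
    rw [hB, hb1c, div_pow, mul_pow, hc2]; ring
  rw [ge_iff_le, hg2, hexp]
  refine le_trans ?_ (mul_le_mul_of_nonneg_left hkey (by positivity))
  have hE := (exp_pos (-(b1 ^ 2 * Δ ^ 2 * s' / 32) / (1 - ν ^ 2))).le
  generalize exp (-(b1 ^ 2 * Δ ^ 2 * s' / 32) / (1 - ν ^ 2)) = E at hE hkey ⊢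
  have hνη : 0 ≤ ν - η := by linarith
  calc A * η * (ν - η) * E ≤ |a1| * b1 * Δ ^ 2 / (2 * π * s' ^ 3) * η * (ν - η) * E := by
        gcongr
    _ = _ := by ring
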